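/- arXiv:1909.13145 — 2 statements merged into one kernel-verified Lean document; each statement's English description precedes it below -/
import Mathlib

section
/- Let m be a positive integer and J, K ⊆ {0,1,…,m−1} with |J| = |K|, and suppose H_{J,K,m} is a Hadamard submatrix of the Fourier matrix F_m. If J′ ⊆ {0,1,…,m−1} with |J′| = |K| and P_m(J′) = P_m(J), then H_{J′,K,m} is also a Hadamard submatrix of F_m. Likewise, if K′ ⊆ {0,1,…,m−1} with |K′| = |J| and P_m(K′) = P_m(K), then H_{J,K′,m} is also a Hadamard submatrix of F_m. -/
open Finset

/-- The difference set `D(X) = {x₁ - x₂ : x₁, x₂ ∈ X}` of a finite set of naturals. -/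
def diffSet (X : Finset ℕ) : Finset ℤ :=
  (X ×ˢ X).image fun q => (q.1 : ℤ) - (q.2 : ℤ)

/-- The `m`-th primitive set `P_m(X) = {m / gcd(m,d) : d ∈ D(X)}`. -/
def primSet (m : ℕ) (X : Finset ℕ) : Finset ℕ :=
  (diffSet X).image fun d => m / Nat.gcd m d.natAbs

/-- `H_{J,K,m}` is a Hadamard submatrix of the Fourier matrix `F_m`:
for all distinct `j₁ j₂ ∈ J`, `∑_{k ∈ K} e^{2πi(j₁-j₂)k/m} = 0`. -/
def IsHadamardSub (m : ℕ) (J K : Finset ℕ) : Prop :=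
  ∀ j₁ ∈ J, ∀ j₂ ∈ J, j₁ ≠ j₂ →
    ∑ k ∈ K, Complex.exp (2 * Real.pi * Complex.I * ((j₁ : ℂ) - (j₂ : ℂ)) * (k : ℂ) / (m : ℂ)) = 0

/-- `ν_p^max` of a finite set of naturals. -/
noncomputable def nuMaxN (p : ℕ) (S : Finset ℕ) : ℕ := S.sup fun n => padicValNat p n

/-- `ν_p^min` of a finite set of naturals (0 for the empty set). -/
noncomputable def nuMinN (p : ℕ) (S : Finset ℕ) : ℕ :=
  if h : S.Nonempty then S.inf' h fun n => padicValNat p n else 0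

/-- `ν_p^max` of a finite set of integers. -/
noncomputable def nuMaxI (p : ℕ) (S : Finset ℤ) : ℕ := S.sup fun d => padicValInt p d

/-- `ν_p^min` of a finite set of integers (0 for the empty set). -/
noncomputable def nuMinI (p : ℕ) (S : Finset ℤ) : ℕ :=
  if h : S.Nonempty then S.inf' h fun d => padicValInt p d else 0

/-- `C_m(X) = ∏_{s ∈ P_m(X) \ {1}} Φ_s(1)`. -/
noncomputable def Cm (m : ℕ) (X : Finset ℕ) : ℤ :=
  ∏ s ∈ (primSet m X).erase 1, (Polynomial.cyclotomic s ℤ).eval 1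


/-!
The sum `∑_{k ∈ K} e^{2πi d k / m}` is the polynomial `∑_{k ∈ K} X^k ∈ ℚ[X]` evaluated at
`e^{2πi d / m}`, a primitive root of unity of order `m / gcd(m, d)`. Whether it vanishes therefore
depends only on that order, since the cyclotomic polynomial is the minimal polynomial over `ℚ`
of every primitive root of a given order. Hence a row set `J'` whose primitive set is covered by
that of `J` inherits the orthogonality of rows from `J`. For columns, a square matrix `H` with
`H Hᴴ = n I` also satisfies `Hᴴ H = n I`, and `H_{K,J,m}` is the transpose of `H_{J,K,m}`.
-/

open Complex Polynomial
open scoped Matrix Real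

theorem IsPrimitiveRoot.aeval_eq_zero_of_aeval_eq_zero {F : Type*} [Field F] [CharZero F]
    {η η' : F} {s : ℕ} (hs : 0 < s) (hη : IsPrimitiveRoot η s) (hη' : IsPrimitiveRoot η' s)
    {p : ℚ[X]} (hp : aeval η p = 0) : aeval η' p = 0 := by
  obtain ⟨q, rfl⟩ : cyclotomic s ℚ ∣ p := cyclotomic_eq_minpoly_rat hη hs ▸ minpoly.dvd ℚ η hp
  rw [map_mul, cyclotomic_eq_minpoly_rat hη' hs, minpoly.aeval, zero_mul]

theorem sum_exp_eq_zero_of_den_eq (K : Finset ℕ) {q q' : ℚ} (hden : q.den = q'.den)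
    (h : ∑ k ∈ K, exp (2 * π * I * q * k) = 0) : ∑ k ∈ K, exp (2 * π * I * q' * k) = 0 := by
  have hsum (r : ℚ) :
      ∑ k ∈ K, exp (2 * π * I * r * k) = aeval (exp (2 * π * I * r)) (∑ k ∈ K, X ^ k : ℚ[X]) := by
    simp only [map_sum, map_pow, aeval_X, ← exp_nat_mul, mul_comm]
  rw [hsum] at h ⊢
  exact (isPrimitiveRoot_exp_rat q).aeval_eq_zero_of_aeval_eq_zero q.den_pos
    (hden ▸ isPrimitiveRoot_exp_rat q') h

theorem Rat.den_intCast_div_natCast {m : ℕ} (hm : m ≠ 0) (d : ℤ) :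
    ((d : ℚ) / m).den = m / Nat.gcd m d.natAbs := by
  rw [← Int.cast_natCast, ← Rat.divInt_eq_div, Rat.den_divInt]
  simp [hm, Int.gcd]

theorem den_sub_div_ne_one {m j₁ j₂ : ℕ} (h₁ : j₁ < m) (h₂ : j₂ < m) (hne : j₁ ≠ j₂) :
    (((j₁ : ℤ) - j₂ : ℤ) / m : ℚ).den ≠ 1 := by
  have hm : (m : ℤ) ≠ 0 := by omega
  rw [← Int.cast_natCast (R := ℚ) m, Ne, Rat.den_div_intCast_eq_one_iff _ _ hm]
  intro hdvd
  have hlt : |(j₁ : ℤ) - j₂| < m := by rw [abs_lt]; omega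
  exact hne (by exact_mod_cast sub_eq_zero.mp (Int.eq_zero_of_abs_lt_dvd hdvd hlt))

theorem IsHadamardSub.of_primSet_subset {m : ℕ} (hm : 0 < m) {J K J' : Finset ℕ}
    (hJ' : J' ⊆ range m) (hP : primSet m J' ⊆ primSet m J) (hH : IsHadamardSub m J K) :
    IsHadamardSub m J' K := by
  intro j₁ h₁ j₂ h₂ hne
  obtain ⟨e, he, hde⟩ := mem_image.mp <| hP <|
    mem_image_of_mem _ <| mem_image_of_mem (fun q : ℕ × ℕ => (q.1 : ℤ) - q.2) (mk_mem_product h₁ h₂)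
  obtain ⟨⟨a, b⟩, hab, rfl⟩ := mem_image.mp he
  rw [mem_product] at hab
  simp only [← Rat.den_intCast_div_natCast hm.ne'] at hde
  have hab_ne : a ≠ b := by
    rintro rfl
    refine den_sub_div_ne_one (mem_range.mp (hJ' h₁)) (mem_range.mp (hJ' h₂)) hne ?_
    simpa using hde.symm
  have hsum := sum_exp_eq_zero_of_den_eq K hde <| by
    convert hH a hab.1 b hab.2 hab_ne using 3; push_cast; ring
  convert hsum using 3; push_cast; ring

theorem Matrix.mul_eq_smul_one_comm_of_equiv {m n α : Type*} [Fintype m] [DecidableEq m]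
    [Fintype n] [DecidableEq n] [Field α] {A : Matrix m n α} {B : Matrix n m α} (e : m ≃ n)
    {c : α} (hc : c ≠ 0) : A * B = c • 1 ↔ B * A = c • 1 := by
  rw [← inv_smul_eq_iff₀ hc, ← inv_smul_eq_iff₀ hc, ← Matrix.mul_smul, ← Matrix.smul_mul,
    Matrix.mul_eq_one_comm_of_equiv e]

noncomputable def fourierSubmatrix (m : ℕ) (J K : Finset ℕ) : Matrix J K ℂ :=
  fun j k => exp (2 * π * I * (j : ℕ) * (k : ℕ) / m)

theorem fourierSubmatrix_transpose (m : ℕ) (J K : Finset ℕ) :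
    (fourierSubmatrix m J K)ᵀ = fourierSubmatrix m K J := by
  ext k j
  simp only [Matrix.transpose_apply, fourierSubmatrix]
  ring_nf

theorem fourierSubmatrix_mul_conjTranspose_apply (m : ℕ) (J K : Finset ℕ) (j j' : J) :
    (fourierSubmatrix m J K * (fourierSubmatrix m J K)ᴴ) j j' =
      ∑ k ∈ K, exp (2 * π * I * ((j : ℕ) - (j' : ℕ)) * k / m) := by
  rw [Matrix.mul_apply, ← sum_coe_sort K]
  refine sum_congr rfl fun k _ => ?_
  simp only [fourierSubmatrix, Matrix.conjTranspose_apply, star_def, ← exp_conj, ← exp_add]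
  congr 1
  simp only [map_div₀, map_mul, map_ofNat, conj_ofReal, conj_I, conj_natCast]
  ring

theorem isHadamardSub_iff_mul_conjTranspose (m : ℕ) (J K : Finset ℕ) :
    IsHadamardSub m J K ↔
      fourierSubmatrix m J K * (fourierSubmatrix m J K)ᴴ = (K.card : ℂ) • 1 := by
  simp only [← Matrix.ext_iff, fourierSubmatrix_mul_conjTranspose_apply, Matrix.smul_apply,
    Matrix.one_apply, Subtype.ext_iff]
  constructor
  · intro hH j j'
    split_ifs with hjj
    · simp [hjj]
    · simpa using hH j j.2 j' j'.2 hjj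
  · intro hH j₁ h₁ j₂ h₂ hne
    simpa [hne] using hH ⟨j₁, h₁⟩ ⟨j₂, h₂⟩

theorem IsHadamardSub.symm {m : ℕ} {J K : Finset ℕ} (hcard : J.card = K.card)
    (hH : IsHadamardSub m J K) : IsHadamardSub m K J := by
  obtain rfl | hK := K.eq_empty_or_nonempty
  · exact fun k hk => absurd hk (notMem_empty k)
  rw [isHadamardSub_iff_mul_conjTranspose] at hH ⊢
  have e : J ≃ K := Fintype.equivOfCardEq (by simpa using hcard)
  rw [Matrix.mul_eq_smul_one_comm_of_equiv e (by simpa using hK.card_pos.ne')] at hH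
  rw [← fourierSubmatrix_transpose, Matrix.conjTranspose_transpose_eq_transpose_conjTranspose,
    ← Matrix.transpose_mul, hH, Matrix.transpose_smul, Matrix.transpose_one, hcard]

theorem hadamard_of_primSet_eq_general (m : ℕ) (hm : 0 < m) (J K : Finset ℕ)
    (hcard : J.card = K.card)
    (hH : IsHadamardSub m J K) :
    (∀ J' : Finset ℕ, J' ⊆ Finset.range m → J'.card = K.card →
      primSet m J' = primSet m J → IsHadamardSub m J' K) ∧
    (∀ K' : Finset ℕ, K' ⊆ Finset.range m → K'.card = J.card →
      primSet m K' = primSet m K → IsHadamardSub m J K') :=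
  ⟨fun _ hJ' _ hP => hH.of_primSet_subset hm hJ' hP.subset,
    fun _ hK' hK'card hP => ((hH.symm hcard).of_primSet_subset hm hK' hP.subset).symm hK'card⟩

theorem hadamard_of_primSet_eq (m : ℕ) (hm : 0 < m) (J K : Finset ℕ)
    (hJ : J ⊆ Finset.range m) (hK : K ⊆ Finset.range m) (hcard : J.card = K.card)
    (hH : IsHadamardSub m J K) :
    (∀ J' : Finset ℕ, J' ⊆ Finset.range m → J'.card = K.card →
      primSet m J' = primSet m J → IsHadamardSub m J' K) ∧
    (∀ K' : Finset ℕ, K' ⊆ Finset.range m → K'.card = J.card →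
      primSet m K' = primSet m K → IsHadamardSub m J K') :=
  hadamard_of_primSet_eq_general m hm J K hcard hH
end

section
/- Let p be a prime greater than 2 and let J, K ⊆ {0,1,…,2p−1} with |J| = |K| = 2. Then H_{J,K,2p} is a Hadamard submatrix of the Fourier matrix F_{2p} if and only if the ordered pair (P_{2p}(J), P_{2p}(K)) is one of ({1,2},{1,2}), ({1,2},{1,2p}), or ({1,2p},{1,2}). -/
open Finset

/-! With `d = a - b`, `f = c - e` and `ζ` a primitive `2p`-th root of unity, the Hadamard condition
for `J = {a, b}`, `K = {c, e}` reads `ζ^(dc) + ζ^(de) = 0`, i.e. `ζ^(df) = -1 = ζ^p`, i.e.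
`2p ∣ df - p`; as `p` is an odd prime, this says that `d` and `f` are odd and `p` divides one of
them. On the other side `P_{2p}({a, b}) = {1, 2p / gcd(2p, |d|)}`, and `2p / gcd(2p, |d|)` equals
`2` exactly when `d` is an odd multiple of `p`, and `2p` exactly when `d` is odd and prime to `p`. -/

theorem Finset.pair_eq_pair_iff_right {α : Type*} [DecidableEq α] {a x y : α} (hy : y ≠ a) :
    ({a, x} : Finset α) = {a, y} ↔ x = y := by
  rw [← Finset.coe_inj, Finset.coe_pair, Finset.coe_pair, Set.pair_eq_pair_iff]
  grind

theorem Nat.gcd_two_mul_prime {p : ℕ} (hp : p.Prime) (hp2 : p ≠ 2) (n : ℕ) :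
    Nat.gcd (2 * p) n = (if Odd n then 1 else 2) * (if p ∣ n then p else 1) := by
  rw [Nat.gcd_comm, Nat.Coprime.gcd_mul n (Nat.coprime_two_left.mpr (hp.odd_of_ne_two hp2))]
  congr 1
  · split_ifs with h
    · exact Nat.coprime_comm.mp (Nat.coprime_two_left.mpr h)
    · exact Nat.gcd_eq_right (even_iff_two_dvd.mp (Nat.not_odd_iff_even.mp h))
  · split_ifs with h
    · exact Nat.gcd_eq_right h
    · exact ((hp.coprime_iff_not_dvd).mpr h).symm

theorem Nat.two_mul_div_gcd_eq_two_iff {p : ℕ} (hp : p.Prime) (hp2 : p ≠ 2) (n : ℕ) :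
    2 * p / Nat.gcd (2 * p) n = 2 ↔ p ∣ n ∧ Odd n := by
  rw [Nat.gcd_two_mul_prime hp hp2]
  split_ifs <;>
    simp [*, hp.ne_one, Nat.mul_div_cancel _ hp.pos, Nat.div_self (Nat.mul_pos two_pos hp.pos)]

theorem Nat.two_mul_div_gcd_eq_self_iff {p : ℕ} (hp : p.Prime) (n : ℕ) :
    2 * p / Nat.gcd (2 * p) n = 2 * p ↔ ¬ p ∣ n ∧ Odd n := by
  rw [Nat.div_eq_self, ← Nat.Coprime, Nat.coprime_mul_iff_left, Nat.coprime_two_left,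
    hp.coprime_iff_not_dvd, and_comm]
  simp [hp.ne_zero]

theorem Int.two_mul_dvd_mul_sub_iff {p : ℕ} (hp : p.Prime) (hp2 : p ≠ 2) (d f : ℤ) :
    (2 * p : ℤ) ∣ d * f - p ↔ ((p : ℤ) ∣ d ∨ (p : ℤ) ∣ f) ∧ Odd d ∧ Odd f := by
  have hp_odd : Odd p := hp.odd_of_ne_two hp2
  have hcop : IsCoprime (2 : ℤ) p := by
    exact_mod_cast Nat.isCoprime_iff_coprime.mpr (Nat.coprime_two_left.mpr hp_odd)
  have hsplit : (2 * p : ℤ) ∣ d * f - p ↔ 2 ∣ d * f - p ∧ (p : ℤ) ∣ d * f - p :=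
    ⟨fun h => ⟨(dvd_mul_right _ _).trans h, (dvd_mul_left _ _).trans h⟩,
      fun h => hcop.mul_dvd h.1 h.2⟩
  have hp_odd_int : Odd (p : ℤ) := by exact_mod_cast hp_odd
  rw [hsplit, dvd_sub_self_right, ← even_iff_two_dvd, Int.even_sub', iff_true_right hp_odd_int,
    Int.odd_mul,
    (Nat.prime_iff_prime_int.mp hp).dvd_mul]
  tauto

theorem IsPrimitiveRoot.zpow_add_zpow_eq_zero_iff {K : Type*} [Field K] {ζ : K} {n : ℕ}
    (hn : n ≠ 0) (h : IsPrimitiveRoot ζ (2 * n)) (x y : ℤ) :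
    ζ ^ x + ζ ^ y = 0 ↔ (2 * n : ℤ) ∣ x - y - n := by
  have hζ : ζ ≠ 0 := h.ne_zero (by omega)
  have hneg : ζ ^ n = -1 := (h.pow (by omega) (mul_comm 2 n)).eq_neg_one_of_two_right
  have hone := h.zpow_eq_one_iff_dvd (x - y - n)
  push_cast at hone
  rw [← hone, zpow_sub₀ hζ, zpow_sub₀ hζ, zpow_natCast, hneg, div_div,
    div_eq_one_iff_eq (mul_ne_zero (zpow_ne_zero _ hζ) (by norm_num)), mul_neg_one,
    add_eq_zero_iff_eq_neg]

theorem fourier_exp_eq_zpow (m : ℕ) (d : ℤ) (k : ℕ) :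
    Complex.exp (2 * Real.pi * Complex.I * d * k / m) =
      Complex.exp (2 * Real.pi * Complex.I / m) ^ (d * k) := by
  rw [← Complex.exp_int_mul]
  congr 1
  push_cast
  ring

theorem sum_fourier_pair_eq_zero_iff {n c e : ℕ} (hn : n ≠ 0) (hce : c ≠ e) (j₁ j₂ : ℕ) :
    ∑ k ∈ {c, e}, Complex.exp
        (2 * Real.pi * Complex.I * ((j₁ : ℂ) - (j₂ : ℂ)) * (k : ℂ) / ((2 * n : ℕ) : ℂ)) = 0 ↔
      (2 * n : ℤ) ∣ ((j₁ : ℤ) - j₂) * ((c : ℤ) - e) - n := by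
  have hζ := Complex.isPrimitiveRoot_exp (2 * n) (by omega)
  have hd : ((j₁ : ℂ) - (j₂ : ℂ)) = (((j₁ : ℤ) - j₂ : ℤ) : ℂ) := by push_cast; rfl
  rw [Finset.sum_pair hce, hd, fourier_exp_eq_zpow, fourier_exp_eq_zpow,
    hζ.zpow_add_zpow_eq_zero_iff hn, mul_sub]

theorem isHadamardSub_pair_iff {n a b c e : ℕ} (hn : n ≠ 0) (hab : a ≠ b) (hce : c ≠ e) :
    IsHadamardSub (2 * n) {a, b} {c, e} ↔ (2 * n : ℤ) ∣ ((a : ℤ) - b) * ((c : ℤ) - e) - n := by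
  have hswap : ((b : ℤ) - a) * ((c : ℤ) - e) - n =
      -(((a : ℤ) - b) * ((c : ℤ) - e) - n) - 2 * n := by
    ring
  simp only [IsHadamardSub, Finset.mem_insert, Finset.mem_singleton, forall_eq_or_imp,
    forall_eq, ne_eq, not_true_eq_false, false_implies, true_and, hab, Ne.symm hab,
    not_false_eq_true, forall_const, sum_fourier_pair_eq_zero_iff hn hce, hswap,
    dvd_sub_self_right, dvd_neg, and_true, and_self]

theorem diffSet_pair (a b : ℕ) : diffSet {a, b} = {0, (a : ℤ) - b, (b : ℤ) - a} := by
  ext x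
  simp only [diffSet, mem_image, mem_product, mem_insert, mem_singleton, Prod.exists]
  constructor
  · rintro ⟨u, v, ⟨rfl | rfl, rfl | rfl⟩, rfl⟩ <;> simp
  · rintro (rfl | rfl | rfl)
    exacts [⟨a, a, by simp⟩, ⟨a, b, by simp⟩, ⟨b, a, by simp⟩]

theorem primSet_pair (m a b : ℕ) (hm : m ≠ 0) :
    primSet m {a, b} = {1, m / Nat.gcd m ((a : ℤ) - b).natAbs} := by
  have hba : ((b : ℤ) - a).natAbs = ((a : ℤ) - b).natAbs := by omega
  simp [primSet, diffSet_pair, hba, Nat.div_self (Nat.pos_of_ne_zero hm)]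

theorem primSet_pair_eq_iff {m a b y : ℕ} (hm : m ≠ 0) (hy : y ≠ 1) :
    primSet m {a, b} = {1, y} ↔ m / Nat.gcd m ((a : ℤ) - b).natAbs = y := by
  rw [primSet_pair m a b hm, Finset.pair_eq_pair_iff_right hy]

theorem hadamard_two_p_iff_general (p : ℕ) (hp : p.Prime) (hp2 : 2 < p) (J K : Finset ℕ)
    (hJ2 : J.card = 2) (hK2 : K.card = 2) :
    IsHadamardSub (2 * p) J K ↔
      ((primSet (2 * p) J = {1, 2} ∧ primSet (2 * p) K = {1, 2}) ∨
       (primSet (2 * p) J = {1, 2} ∧ primSet (2 * p) K = {1, 2 * p}) ∨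
       (primSet (2 * p) J = {1, 2 * p} ∧ primSet (2 * p) K = {1, 2})) := by
  obtain ⟨a, b, hab, rfl⟩ := Finset.card_eq_two.mp hJ2
  obtain ⟨c, e, hce, rfl⟩ := Finset.card_eq_two.mp hK2
  have hp_ne_two : p ≠ 2 := hp2.ne'
  have hm : 2 * p ≠ 0 := by omega
  simp only [isHadamardSub_pair_iff hp.ne_zero hab hce, Int.two_mul_dvd_mul_sub_iff hp hp_ne_two,
    primSet_pair_eq_iff hm (show 2 ≠ 1 by decide), primSet_pair_eq_iff hm (show 2 * p ≠ 1 by omega),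
    Nat.two_mul_div_gcd_eq_two_iff hp hp_ne_two, Nat.two_mul_div_gcd_eq_self_iff hp,
    Int.natCast_dvd, Int.natAbs_odd]
  tauto

theorem hadamard_two_p_iff (p : ℕ) (hp : p.Prime) (hp2 : 2 < p) (J K : Finset ℕ)
    (hJ : J ⊆ Finset.range (2 * p)) (hK : K ⊆ Finset.range (2 * p))
    (hJ2 : J.card = 2) (hK2 : K.card = 2) :
    IsHadamardSub (2 * p) J K ↔
      ((primSet (2 * p) J = {1, 2} ∧ primSet (2 * p) K = {1, 2}) ∨
       (primSet (2 * p) J = {1, 2} ∧ primSet (2 * p) K = {1, 2 * p}) ∨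
       (primSet (2 * p) J = {1, 2 * p} ∧ primSet (2 * p) K = {1, 2})) :=
  hadamard_two_p_iff_general p hp hp2 J K hJ2 hK2
end
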